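/- The inverse of a solution of the curvature equation solves the reflected equation (step in the proof of Theorem 3.2). Let f : (a,c) × ℝ → ℝ. Let u : [a,c] → ℝ be continuous, continuously differentiable on (a,c] with u'(x) > 0 for all x ∈ (a,c], u' locally absolutely continuous on (a,c], u concave, lim_{x→a⁺} u'(x) = +∞, and −u''(x) = f(x, u(x)) (1 + u'(x)²)^{3/2} for almost every x ∈ (a,c). Set α = u(a), ω = u(c), and let w : [α,ω] → [a,c] be the inverse function of u. Then w is continuously differentiable on [α,ω] with w(α) = a and w'(α) = 0, w' is locally absolutely continuous on (α,ω], and w''(t) = f(w(t), t) (1 + w'(t)²)^{3/2} for almost every t ∈ (α,ω). -/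

import Mathlib

/-!
Since `u' > 0`, `u` is a strictly increasing homeomorphism of `[a, c]` onto `[α, ω]`, so `w` is
continuous and, by the inverse function theorem, `w' = 1 / (u' ∘ w)` on `(α, ω)`; the vertical
tangent `u'(a⁺) = +∞` lets `w'` extend continuously by `0` at `α`, and the one-sided derivatives at
the endpoints follow from the limits of `w'`. For the equation, substitute `t = u y`: since
`w'(u y) = 1 / u'(y)`, the integrand `f(w, t) (1 + w'²)^{3/2} dt` pulls back to
`f(y, u) (1 + u'²)^{3/2} / u'² dy = -u'' / u'² dy`, the a.e. derivative of `1 / u'`, which is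
absolutely continuous on every `[a', c]` because `u'` is and stays away from `0` there.
-/

open Set Filter MeasureTheory Topology
open scoped NNReal

theorem LipschitzOnWith.comp_absolutelyContinuousOnInterval {X Y : Type*} [PseudoMetricSpace X]
    [PseudoMetricSpace Y] {φ : X → Y} {f : ℝ → X} {K : ℝ≥0} {s : Set X} {a b : ℝ}
    (hφ : LipschitzOnWith K φ s) (hf : AbsolutelyContinuousOnInterval f a b)
    (hfs : MapsTo f (uIcc a b) s) : AbsolutelyContinuousOnInterval (φ ∘ f) a b := by
  rw [absolutelyContinuousOnInterval_iff] at hf ⊢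
  intro ε hε
  obtain ⟨δ, hδ, hfδ⟩ := hf (ε / (K + 1)) (by positivity)
  refine ⟨δ, hδ, fun E hE hEδ => ?_⟩
  calc ∑ i ∈ Finset.range E.1, dist ((φ ∘ f) (E.2 i).1) ((φ ∘ f) (E.2 i).2)
      ≤ ∑ i ∈ Finset.range E.1, K * dist (f (E.2 i).1) (f (E.2 i).2) :=
        Finset.sum_le_sum fun i hi =>
          hφ.dist_le_mul _ (hfs (hE.1 i hi).1) _ (hfs (hE.1 i hi).2)
    _ = K * ∑ i ∈ Finset.range E.1, dist (f (E.2 i).1) (f (E.2 i).2) := by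
        rw [Finset.mul_sum]
    _ ≤ K * (ε / (K + 1)) := by gcongr; exact (hfδ E hE hEδ).le
    _ < ε := by
        rw [mul_div_assoc', div_lt_iff₀ (by positivity)]
        nlinarith

theorem AbsolutelyContinuousOnInterval.inv {f : ℝ → ℝ} {a b : ℝ}
    (hf : AbsolutelyContinuousOnInterval f a b) (hpos : ∀ x ∈ uIcc a b, 0 < f x) :
    AbsolutelyContinuousOnInterval (fun x => (f x)⁻¹) a b := by
  obtain ⟨m, M, himg⟩ : ∃ m M, f '' uIcc a b = Icc m M :=
    ⟨_, _, hf.continuousOn.image_Icc inf_le_sup⟩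
  have hm : Icc m M ⊆ Ioi 0 := himg ▸ by rintro _ ⟨x, hx, rfl⟩; exact hpos x hx
  obtain ⟨K, hK⟩ := (contDiffOn_inv ℝ).mono (fun y hy => (hm hy).ne' : Icc m M ⊆ {0}ᶜ)
    |>.exists_lipschitzOnWith one_ne_zero (convex_Icc m M) isCompact_Icc
  exact hK.comp_absolutelyContinuousOnInterval hf (himg ▸ mapsTo_image f _)

theorem inv_eq_inv_add_integral_of_eq_add_integral {a b : ℝ} {v g : ℝ → ℝ}
    (hg : IntervalIntegrable g volume a b) (hv : ∀ x ∈ uIcc a b, v x = v a + ∫ t in a..x, g t)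
    (hpos : ∀ x ∈ uIcc a b, 0 < v x) :
    (v b)⁻¹ = (v a)⁻¹ + ∫ t in a..b, -g t / v t ^ 2 := by
  set V : ℝ → ℝ := fun x => v a + ∫ t in a..x, g t
  have hV_ac : AbsolutelyContinuousOnInterval V a b :=
    (LipschitzWith.const (v a)).lipschitzOnWith.absolutelyContinuousOnInterval.add
      (hg.absolutelyContinuousOnInterval_intervalIntegral left_mem_uIcc)
  have hVv : ∀ x ∈ uIcc a b, V x = v x := fun x hx => (hv x hx).symm
  have hV_deriv : ∀ᵐ x, x ∈ uIoc a b → deriv (fun x => (V x)⁻¹) x = -g x / v x ^ 2 := by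
    filter_upwards [hg.ae_hasDerivAt_integral] with x hx hxab
    have hx' : x ∈ uIcc a b := uIoc_subset_uIcc hxab
    rw [← hVv x hx']
    exact (((hx hx' a left_mem_uIcc).const_add (v a)).inv (hVv x hx' ▸ hpos x hx').ne').deriv
  have hFTC := (hV_ac.inv fun x hx => hVv x hx ▸ hpos x hx).integral_deriv_eq_sub
  rw [intervalIntegral.integral_congr_ae hV_deriv] at hFTC
  rw [hFTC, hv b right_mem_uIcc]
  simp [V]

theorem StrictMonoOn.continuousOn_Icc_of_surjOn {α β : Type*} [LinearOrder α] [TopologicalSpace α]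
    [OrderTopology α] [LinearOrder β] [TopologicalSpace β] [OrderTopology β] [DenselyOrdered β]
    {f : α → β} {p q : α} (hf : StrictMonoOn f (Icc p q))
    (hsurj : SurjOn f (Icc p q) (Icc (f p) (f q))) : ContinuousOn f (Icc p q) := by
  intro t ht
  have hL : ContinuousWithinAt f (Icc p t) t := by
    rcases ht.1.eq_or_lt with rfl | hpt
    · simp
    refine (hf.continuousWithinAt_left_of_image_mem_nhdsWithin
      (Icc_mem_nhdsLE_of_mem ⟨hpt, ht.2⟩) (mem_of_superset ?_ hsurj)).mono Icc_subset_Iic_self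
    exact Icc_mem_nhdsLE_of_mem ⟨hf (left_mem_Icc.2 (hpt.le.trans ht.2)) ht hpt,
      hf.monotoneOn ht (right_mem_Icc.2 (hpt.le.trans ht.2)) ht.2⟩
  have hR : ContinuousWithinAt f (Icc t q) t := by
    rcases ht.2.eq_or_lt with rfl | htq
    · simp
    refine (hf.continuousWithinAt_right_of_image_mem_nhdsWithin
      (Icc_mem_nhdsGE_of_mem ⟨ht.1, htq⟩) (mem_of_superset ?_ hsurj)).mono Icc_subset_Ici_self
    exact Icc_mem_nhdsGE_of_mem ⟨hf.monotoneOn (left_mem_Icc.2 (ht.1.trans htq.le)) ht ht.1,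
      hf ht (right_mem_Icc.2 (ht.1.trans htq.le)) htq⟩
  exact (hL.union hR).mono Icc_subset_Icc_union_Icc

theorem continuousOn_Icc_of_continuousOn_Ioc {α β : Type*} [LinearOrder α] [TopologicalSpace α]
    [OrderTopology α] [TopologicalSpace β] {g : α → β} {p q : α} (hg : ContinuousOn g (Ioc p q))
    (hp : ContinuousWithinAt g (Ioi p) p) : ContinuousOn g (Icc p q) := by
  intro t ht
  rcases ht.1.eq_or_lt with rfl | hpt
  · exact (continuousWithinAt_Ioi_iff_Ici.1 hp).mono Icc_subset_Ici_self
  · exact (hg t ⟨hpt, ht.2⟩).mono_of_mem_nhdsWithin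
      (mem_nhdsWithin.2 ⟨Ioi p, isOpen_Ioi, hpt, fun y hy => ⟨hy.1, hy.2.2⟩⟩)

theorem hasDerivWithinAt_Icc_of_hasDerivAt_Ioo {E : Type*} [NormedAddCommGroup E]
    [NormedSpace ℝ E] {f f' : ℝ → E} {p q : ℝ} (hpq : p < q) (hf : ContinuousOn f (Icc p q))
    (hf' : ContinuousOn f' (Icc p q)) (hderiv : ∀ t ∈ Ioo p q, HasDerivAt f (f' t) t) :
    ∀ t ∈ Icc p q, HasDerivWithinAt f (f' t) (Icc p q) t := by
  have hdiff : DifferentiableOn ℝ f (Ioo p q) := fun t ht =>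
    (hderiv t ht).differentiableAt.differentiableWithinAt
  have hlim : ∀ t ∈ Icc p q, Tendsto (deriv f) (𝓝[Ioo p q] t) (𝓝 (f' t)) := fun t ht =>
    ((hf' t ht).mono Ioo_subset_Icc_self).congr'
      (eventually_nhdsWithin_of_forall fun s hs => (hderiv s hs).deriv.symm)
  intro t ht
  rcases ht.1.eq_or_lt with rfl | hpt
  · refine (hasDerivWithinAt_Ici_of_tendsto_deriv hdiff ((hf _ ht).mono Ioo_subset_Icc_self)
      (Ioo_mem_nhdsGT hpq) ?_).mono Icc_subset_Ici_self
    simpa only [nhdsWithin_Ioo_eq_nhdsGT hpq] using hlim _ ht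
  rcases ht.2.eq_or_lt with rfl | htq
  · refine (hasDerivWithinAt_Iic_of_tendsto_deriv hdiff ((hf _ ht).mono Ioo_subset_Icc_self)
      (Ioo_mem_nhdsLT hpq) ?_).mono Icc_subset_Iic_self
    simpa only [nhdsWithin_Ioo_eq_nhdsLT hpq] using hlim _ ht
  · exact (hderiv t ⟨hpt, htq⟩).hasDerivWithinAt

section Inverse

variable {a c : ℝ} {u w : ℝ → ℝ}

theorem mapsTo_Icc_of_leftInvOn (hac : a ≤ c) (hu : ContinuousOn u (Icc a c))
    (hw₁ : LeftInvOn w u (Icc a c)) : MapsTo w (Icc (u a) (u c)) (Icc a c) := by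
  intro t ht
  obtain ⟨x, hx, rfl⟩ := intermediate_value_Icc hac hu ht
  rwa [hw₁ hx]

theorem mapsTo_Ioc_of_leftInvOn (hac : a ≤ c) (hu : ContinuousOn u (Icc a c))
    (hw₁ : LeftInvOn w u (Icc a c)) (hw₂ : LeftInvOn u w (Icc (u a) (u c))) :
    MapsTo w (Ioc (u a) (u c)) (Ioc a c) := by
  intro t ht
  have hwt := mapsTo_Icc_of_leftInvOn hac hu hw₁ (Ioc_subset_Icc_self ht)
  refine ⟨hwt.1.lt_of_ne fun hwa => ht.1.ne ?_, hwt.2⟩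
  rw [← hw₂ (Ioc_subset_Icc_self ht), ← hwa]

theorem mapsTo_Ioo_of_leftInvOn (hac : a ≤ c) (hu : ContinuousOn u (Icc a c))
    (hw₁ : LeftInvOn w u (Icc a c)) (hw₂ : LeftInvOn u w (Icc (u a) (u c))) :
    MapsTo w (Ioo (u a) (u c)) (Ioo a c) := by
  intro t ht
  have hwt := mapsTo_Ioc_of_leftInvOn hac hu hw₁ hw₂ (Ioo_subset_Ioc_self ht)
  refine ⟨hwt.1, hwt.2.lt_of_ne fun hwc => ht.2.ne ?_⟩
  rw [← hw₂ (Ioo_subset_Icc_self ht), hwc]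

theorem strictMonoOn_Icc_of_leftInvOn (hac : a ≤ c) (hu : ContinuousOn u (Icc a c))
    (hu_mono : MonotoneOn u (Icc a c)) (hw₁ : LeftInvOn w u (Icc a c))
    (hw₂ : LeftInvOn u w (Icc (u a) (u c))) : StrictMonoOn w (Icc (u a) (u c)) := by
  intro s hs t ht hst
  by_contra! hts
  have := hu_mono (mapsTo_Icc_of_leftInvOn hac hu hw₁ ht)
    (mapsTo_Icc_of_leftInvOn hac hu hw₁ hs) hts
  rw [hw₂ hs, hw₂ ht] at this
  exact hst.not_ge this

theorem continuousOn_Icc_of_leftInvOn (hac : a ≤ c) (hu : ContinuousOn u (Icc a c))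
    (hu_mono : MonotoneOn u (Icc a c)) (hw₁ : LeftInvOn w u (Icc a c))
    (hw₂ : LeftInvOn u w (Icc (u a) (u c))) : ContinuousOn w (Icc (u a) (u c)) := by
  refine (strictMonoOn_Icc_of_leftInvOn hac hu hu_mono hw₁ hw₂).continuousOn_Icc_of_surjOn ?_
  rw [hw₁ (left_mem_Icc.2 hac), hw₁ (right_mem_Icc.2 hac)]
  exact fun x hx => ⟨u x, hu_mono.mapsTo_Icc hx, hw₁ hx⟩

theorem hasDerivAt_of_leftInvOn (hac : a ≤ c) (hu : ContinuousOn u (Icc a c))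
    (hu_mono : MonotoneOn u (Icc a c)) (hw₁ : LeftInvOn w u (Icc a c))
    (hw₂ : LeftInvOn u w (Icc (u a) (u c))) {u' : ℝ → ℝ}
    (hu_deriv : ∀ x ∈ Ioo a c, HasDerivAt u (u' x) x) (hu' : ∀ x ∈ Ioo a c, u' x ≠ 0) {t : ℝ}
    (ht : t ∈ Ioo (u a) (u c)) : HasDerivAt w (u' (w t))⁻¹ t := by
  have hwt := mapsTo_Ioo_of_leftInvOn hac hu hw₁ hw₂ ht
  exact (hu_deriv _ hwt).of_local_left_inverse
    ((continuousOn_Icc_of_leftInvOn hac hu hu_mono hw₁ hw₂).continuousAt (Icc_mem_nhds ht.1 ht.2))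
    (hu' _ hwt)
    (eventually_of_mem (Ioo_mem_nhds ht.1 ht.2) fun s hs => hw₂ (Ioo_subset_Icc_self hs))

end Inverse

theorem continuousOn_inv_comp_of_tendsto_atTop {a c α ω : ℝ} {u' w W : ℝ → ℝ} (hαω : α < ω)
    (hw : ContinuousOn w (Icc α ω)) (hw_maps : MapsTo w (Ioc α ω) (Ioc a c)) (hwα : w α = a)
    (hu'_cont : ContinuousOn u' (Ioc a c)) (hu'_pos : ∀ x ∈ Ioc a c, 0 < u' x)
    (hblow : Tendsto u' (𝓝[>] a) atTop) (hW : ∀ t ∈ Ioc α ω, W t = (u' (w t))⁻¹)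
    (hW₀ : W α = 0) : ContinuousOn W (Icc α ω) := by
  refine continuousOn_Icc_of_continuousOn_Ioc (((hu'_cont.comp (hw.mono Ioc_subset_Icc_self)
    hw_maps).inv₀ fun t ht => (hu'_pos _ (hw_maps ht)).ne').congr hW) ?_
  have hw_lim : Tendsto w (𝓝[>] α) (𝓝[>] a) := by
    refine tendsto_nhdsWithin_iff.2 ⟨?_, ?_⟩
    · rw [← nhdsWithin_Ioc_eq_nhdsGT hαω, ← hwα]
      exact (hw α (left_mem_Icc.2 hαω.le)).mono Ioc_subset_Icc_self
    · filter_upwards [Ioc_mem_nhdsGT hαω] with t ht using (hw_maps ht).1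
  rw [ContinuousWithinAt, hW₀]
  refine (hblow.comp hw_lim).inv_tendsto_atTop.congr' ?_
  filter_upwards [Ioc_mem_nhdsGT hαω] with t ht using (hW t ht).symm

theorem one_add_inv_sq_rpow_mul {p : ℝ} (hp : 0 < p) :
    (1 + p⁻¹ ^ 2) ^ ((3 : ℝ) / 2) * p = (1 + p ^ 2) ^ ((3 : ℝ) / 2) / p ^ 2 := by
  have hp3 : (p ^ 2) ^ ((3 : ℝ) / 2) = p ^ 3 := by
    rw [← Real.rpow_natCast, ← Real.rpow_mul hp.le, ← Real.rpow_natCast]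
    norm_num
  rw [show 1 + p⁻¹ ^ 2 = (1 + p ^ 2) / p ^ 2 by field_simp; ring,
    Real.div_rpow (by positivity) (by positivity), hp3]
  field_simp

section ChangeOfVariables

variable {p q : ℝ} {u u' u'' F : ℝ → ℝ}

theorem intervalIntegrable_of_comp_mul_deriv_ae_eq (hpq : p ≤ q)
    (hu : ContinuousOn u (Icc p q)) (hu' : ∀ y ∈ Ioo p q, HasDerivAt u (u' y) y)
    (hu'_pos : ∀ y ∈ Icc p q, 0 < u' y) (hu'_cont : ContinuousOn u' (Icc p q))
    (hu'' : IntegrableOn u'' (Icc p q))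
    (hF : ∀ᵐ y, y ∈ Ioo p q → F (u y) * u' y = -u'' y / u' y ^ 2) :
    IntervalIntegrable F volume (u p) (u q) := by
  rw [← intervalIntegral.integrable_comp_mul_deriv_iff_of_deriv_nonneg (by rwa [uIcc_of_le hpq])
    (by simpa [hpq] using hu')
    (by simpa [hpq] using fun y hy => (hu'_pos y (Ioo_subset_Icc_self hy)).le),
    intervalIntegrable_iff_integrableOn_Ioo_of_le hpq]
  have hint : IntegrableOn (fun y => -u'' y / u' y ^ 2) (Icc p q) := by
    simpa only [div_eq_mul_inv, Pi.neg_apply, Pi.inv_apply, Pi.pow_apply] using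
      hu''.neg.mul_continuousOn ((hu'_cont.pow 2).inv₀ fun y hy => (pow_pos (hu'_pos y hy) 2).ne')
        isCompact_Icc
  refine (hint.mono_set Ioo_subset_Icc_self).congr_fun_ae ?_
  filter_upwards [ae_restrict_mem measurableSet_Ioo, ae_restrict_of_ae hF] with y hy hFy
  exact (hFy hy).symm

theorem integral_eq_inv_sub_inv_of_comp_mul_deriv_ae_eq (hpq : p ≤ q)
    (hu : ContinuousOn u (Icc p q)) (hu' : ∀ y ∈ Ioo p q, HasDerivAt u (u' y) y)
    (hu'_pos : ∀ y ∈ Icc p q, 0 < u' y) (hu'' : IntegrableOn u'' (Icc p q))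
    (hu'_eq : ∀ y ∈ Icc p q, u' y = u' p + ∫ t in p..y, u'' t)
    (hF : ∀ᵐ y, y ∈ Ioo p q → F (u y) * u' y = -u'' y / u' y ^ 2) :
    ∫ s in u p..u q, F s = (u' q)⁻¹ - (u' p)⁻¹ := by
  rw [← intervalIntegral.integral_comp_mul_deriv_of_deriv_nonneg (by rwa [uIcc_of_le hpq])
    (by simpa [hpq] using hu')
    (by simpa [hpq] using fun y hy => (hu'_pos y (Ioo_subset_Icc_self hy)).le)]
  have hFq : ∀ᵐ y, y ∈ uIoc p q → (F ∘ u) y * u' y = -u'' y / u' y ^ 2 := by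
    filter_upwards [hF, volume.ae_ne q] with y hFy hyq hy
    rw [uIoc_of_le hpq] at hy
    exact hFy ⟨hy.1, hy.2.lt_of_ne hyq⟩
  rw [intervalIntegral.integral_congr_ae hFq, inv_eq_inv_add_integral_of_eq_add_integral
    ((intervalIntegrable_iff_integrableOn_Icc_of_le hpq).2 hu'') (by rwa [uIcc_of_le hpq])
    (by rwa [uIcc_of_le hpq])]
  ring

end ChangeOfVariables

theorem eq_add_integral_of_comp_mul_deriv_ae_eq {a c : ℝ} {u u' u'' w W F : ℝ → ℝ}
    (hu : ContinuousOn u (Icc a c)) (hu_deriv : ∀ x ∈ Ioo a c, HasDerivAt u (u' x) x)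
    (hu'_cont : ContinuousOn u' (Ioc a c)) (hu'_pos : ∀ x ∈ Ioc a c, 0 < u' x)
    (hu'_locAC : ∀ a' ∈ Ioc a c, IntegrableOn u'' (Icc a' c) ∧
      ∀ x ∈ Icc a' c, u' x = u' a' + ∫ t in a'..x, u'' t)
    (hF : ∀ᵐ y, y ∈ Ioo a c → F (u y) * u' y = -u'' y / u' y ^ 2)
    (hw_inv : LeftInvOn u w (Icc (u a) (u c))) (hw_mono : MonotoneOn w (Icc (u a) (u c)))
    (hw_maps : MapsTo w (Ioc (u a) (u c)) (Ioc a c))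
    (hW : ∀ t ∈ Ioc (u a) (u c), W t = (u' (w t))⁻¹) {α' : ℝ} (hα' : α' ∈ Ioc (u a) (u c)) :
    IntegrableOn F (Icc α' (u c)) ∧ ∀ t ∈ Icc α' (u c), W t = W α' + ∫ s in α'..t, F s := by
  have hp : w α' ∈ Ioc a c := hw_maps hα'
  have hup : u (w α') = α' := hw_inv ⟨hα'.1.le, hα'.2⟩
  obtain ⟨hu''_int, hu'_eq⟩ := hu'_locAC _ hp
  have hIcc : Icc (w α') c ⊆ Ioc a c := fun y hy => ⟨hp.1.trans_le hy.1, hy.2⟩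
  have hIoo : Ioo (w α') c ⊆ Ioo a c := fun y hy => ⟨hp.1.trans hy.1, hy.2⟩
  have hF' : ∀ x ≤ c, ∀ᵐ y, y ∈ Ioo (w α') x → F (u y) * u' y = -u'' y / u' y ^ 2 :=
    fun x hx => hF.mono fun y hFy hy => hFy (hIoo ⟨hy.1, hy.2.trans_le hx⟩)
  constructor
  · rw [← intervalIntegrable_iff_integrableOn_Icc_of_le hα'.2, ← hup]
    exact intervalIntegrable_of_comp_mul_deriv_ae_eq hp.2 (hu.mono (hIcc.trans Ioc_subset_Icc_self))
      (fun y hy => hu_deriv y (hIoo hy)) (fun y hy => hu'_pos y (hIcc hy)) (hu'_cont.mono hIcc)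
      hu''_int (hF' c le_rfl)
  · intro t ht
    have htα : t ∈ Icc (u a) (u c) := ⟨hα'.1.le.trans ht.1, ht.2⟩
    have hx : w t ∈ Icc (w α') c :=
      ⟨hw_mono ⟨hα'.1.le, hα'.2⟩ htα ht.1, (hw_maps ⟨hα'.1.trans_le ht.1, ht.2⟩).2⟩
    have hsub : Icc (w α') (w t) ⊆ Icc (w α') c := Icc_subset_Icc_right hx.2
    have hchange := integral_eq_inv_sub_inv_of_comp_mul_deriv_ae_eq hx.1
      (hu.mono ((hsub.trans hIcc).trans Ioc_subset_Icc_self))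
      (fun y hy => hu_deriv y (hIoo ⟨hy.1, hy.2.trans_le hx.2⟩))
      (fun y hy => hu'_pos y (hIcc (hsub hy))) (hu''_int.mono_set hsub)
      (fun y hy => hu'_eq y (hsub hy)) (hF' _ hx.2)
    rw [hup, hw_inv htα] at hchange
    rw [hchange, hW t ⟨hα'.1.trans_le ht.1, ht.2⟩, hW α' hα']
    ring

theorem ae_curvature_integrand_comp_mul_deriv {a c : ℝ} {f : ℝ → ℝ → ℝ} {u u' u'' w W : ℝ → ℝ}
    (hu_mono : StrictMonoOn u (Icc a c)) (hu'_pos : ∀ x ∈ Ioc a c, 0 < u' x)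
    (heq : ∀ᵐ x, x ∈ Ioo a c → -u'' x = f x (u x) * (1 + u' x ^ 2) ^ ((3 : ℝ) / 2))
    (hw_inv : LeftInvOn w u (Icc a c)) (hW : ∀ t ∈ Ioc (u a) (u c), W t = (u' (w t))⁻¹) :
    ∀ᵐ y, y ∈ Ioo a c →
      f (w (u y)) (u y) * (1 + W (u y) ^ 2) ^ ((3 : ℝ) / 2) * u' y = -u'' y / u' y ^ 2 := by
  filter_upwards [heq] with y hy hyac
  have hyIcc : y ∈ Icc a c := Ioo_subset_Icc_self hyac
  have hWy : W (u y) = (u' y)⁻¹ := by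
    rw [hW (u y) ⟨hu_mono (left_mem_Icc.2 (hyac.1.trans hyac.2).le) hyIcc hyac.1,
      hu_mono.monotoneOn hyIcc (right_mem_Icc.2 (hyac.1.trans hyac.2).le) hyac.2.le⟩, hw_inv hyIcc]
  rw [hWy, hw_inv hyIcc, mul_assoc, one_add_inv_sq_rpow_mul (hu'_pos y (Ioo_subset_Ioc_self hyac)),
    hy hyac, mul_div_assoc]

theorem inverse_solves_reflected_curvature_equation_general
    (a c : ℝ) (hac : a < c) (f : ℝ → ℝ → ℝ) (u u' u'' : ℝ → ℝ)
    (hu_cont : ContinuousOn u (Icc a c))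
    -- u continuously differentiable on (a,c] with u' > 0
    (hu_deriv : ∀ x ∈ Ioo a c, HasDerivAt u (u' x) x)
    (hu'_cont : ContinuousOn u' (Ioc a c))
    (hu'_pos : ∀ x ∈ Ioc a c, 0 < u' x)
    -- u' locally absolutely continuous on (a,c] with a.e. derivative u''
    (hu'_locAC : ∀ a' ∈ Ioc a c, IntegrableOn u'' (Icc a' c) ∧
      ∀ x ∈ Icc a' c, u' x = u' a' + ∫ t in a'..x, u'' t)
    -- vertical tangent at a
    (hblow : Tendsto u' (𝓝[>] a) atTop)
    -- the prescribed curvature equation a.e. in (a,c)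
    (heq : ∀ᵐ x ∂volume, x ∈ Ioo a c →
      -u'' x = f x (u x) * (1 + u' x ^ 2) ^ ((3:ℝ)/2))
    -- w is the inverse function of u on [a,c]
    (w : ℝ → ℝ)
    (hw_inv₁ : ∀ x ∈ Icc a c, w (u x) = x)
    (hw_inv₂ : ∀ t ∈ Icc (u a) (u c), u (w t) = t) :
    ∃ w' : ℝ → ℝ,
      -- w is continuously differentiable on [α,ω] = [u a, u c]
      ContinuousOn w' (Icc (u a) (u c)) ∧
      (∀ t ∈ Icc (u a) (u c), HasDerivWithinAt w (w' t) (Icc (u a) (u c)) t) ∧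
      (∀ t ∈ Ioo (u a) (u c), HasDerivAt w (w' t) t) ∧
      w (u a) = a ∧ w' (u a) = 0 ∧
      -- w' is locally absolutely continuous on (α,ω] and
      -- w'' = f(w(t),t)(1+w'(t)²)^{3/2} a.e. in (α,ω)
      (∀ α' ∈ Ioc (u a) (u c),
        IntegrableOn (fun t => f (w t) t * (1 + (w' t) ^ 2) ^ ((3:ℝ)/2)) (Icc α' (u c)) ∧
        ∀ t ∈ Icc α' (u c),
          w' t = w' α' + ∫ s in α'..t, f (w s) s * (1 + (w' s) ^ 2) ^ ((3:ℝ)/2)) := by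
  have hu_mono : StrictMonoOn u (Icc a c) :=
    strictMonoOn_of_deriv_pos (convex_Icc a c) hu_cont fun x hx => by
      rw [interior_Icc] at hx
      exact (hu_deriv x hx).deriv ▸ hu'_pos x (Ioo_subset_Ioc_self hx)
  have hαω : u a < u c := hu_mono (left_mem_Icc.2 hac.le) (right_mem_Icc.2 hac.le) hac
  have hwa : w (u a) = a := hw_inv₁ a (left_mem_Icc.2 hac.le)
  have hw_cont := continuousOn_Icc_of_leftInvOn hac.le hu_cont hu_mono.monotoneOn hw_inv₁ hw_inv₂
  have hw_Ioc := mapsTo_Ioc_of_leftInvOn hac.le hu_cont hw_inv₁ hw_inv₂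
  set W := Function.update (fun t => (u' (w t))⁻¹) (u a) 0
  have hW : ∀ t ∈ Ioc (u a) (u c), W t = (u' (w t))⁻¹ := fun t ht =>
    Function.update_of_ne ht.1.ne' _ _
  have hW₀ : W (u a) = 0 := Function.update_self _ _ _
  have hW_cont := continuousOn_inv_comp_of_tendsto_atTop hαω hw_cont hw_Ioc hwa hu'_cont hu'_pos
    hblow hW hW₀
  have hw_deriv : ∀ t ∈ Ioo (u a) (u c), HasDerivAt w (W t) t := fun t ht =>
    hW t (Ioo_subset_Ioc_self ht) ▸ hasDerivAt_of_leftInvOn hac.le hu_cont hu_mono.monotoneOn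
      hw_inv₁ hw_inv₂ hu_deriv (fun x hx => (hu'_pos x (Ioo_subset_Ioc_self hx)).ne') ht
  refine ⟨W, hW_cont, hasDerivWithinAt_Icc_of_hasDerivAt_Ioo hαω hw_cont hW_cont hw_deriv,
    hw_deriv, hwa, hW₀, fun α' hα' => ?_⟩
  exact eq_add_integral_of_comp_mul_deriv_ae_eq hu_cont hu_deriv hu'_cont hu'_pos hu'_locAC
    (ae_curvature_integrand_comp_mul_deriv hu_mono hu'_pos heq hw_inv₁ hW) hw_inv₂
    (strictMonoOn_Icc_of_leftInvOn hac.le hu_cont hu_mono.monotoneOn hw_inv₁ hw_inv₂).monotoneOn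
    hw_Ioc hW hα'

/-- **The inverse of a solution of the curvature equation solves the reflected equation (step in
the proof of Theorem 3.2).** If `u : [a,c] → ℝ` is continuous, C¹ on `(a,c]` with `u' > 0`
there, `u'` locally absolutely continuous on `(a,c]`, `u` concave, `u'(a⁺) = +∞`, and
`-u'' = f(x,u)(1+u'²)^{3/2}` a.e. in `(a,c)`, then the inverse `w : [α,ω] → [a,c]`
(with `α = u(a)`, `ω = u(c)`) is C¹ on `[α,ω]` with `w(α) = a`, `w'(α) = 0`, `w'` locally
absolutely continuous on `(α,ω]`, and `w'' = f(w,t)(1+w'²)^{3/2}` a.e. in `(α,ω)`. -/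
theorem inverse_solves_reflected_curvature_equation
    (a c : ℝ) (hac : a < c) (f : ℝ → ℝ → ℝ) (u u' u'' : ℝ → ℝ)
    (hu_cont : ContinuousOn u (Icc a c))
    -- u continuously differentiable on (a,c] with u' > 0
    (hu_deriv : ∀ x ∈ Ioo a c, HasDerivAt u (u' x) x)
    (hu_derivc : HasDerivWithinAt u (u' c) (Iic c) c)
    (hu'_cont : ContinuousOn u' (Ioc a c))
    (hu'_pos : ∀ x ∈ Ioc a c, 0 < u' x)
    -- u' locally absolutely continuous on (a,c] with a.e. derivative u''
    (hu'_locAC : ∀ a' ∈ Ioc a c, IntegrableOn u'' (Icc a' c) ∧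
      ∀ x ∈ Icc a' c, u' x = u' a' + ∫ t in a'..x, u'' t)
    -- u concave on [a,c]
    (hconc : ConcaveOn ℝ (Icc a c) u)
    -- vertical tangent at a
    (hblow : Tendsto u' (𝓝[>] a) atTop)
    -- the prescribed curvature equation a.e. in (a,c)
    (heq : ∀ᵐ x ∂volume, x ∈ Ioo a c →
      -u'' x = f x (u x) * (1 + u' x ^ 2) ^ ((3:ℝ)/2))
    -- w is the inverse function of u on [a,c]
    (w : ℝ → ℝ)
    (hw_inv₁ : ∀ x ∈ Icc a c, w (u x) = x)
    (hw_inv₂ : ∀ t ∈ Icc (u a) (u c), u (w t) = t) :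
    ∃ w' : ℝ → ℝ,
      -- w is continuously differentiable on [α,ω] = [u a, u c]
      ContinuousOn w' (Icc (u a) (u c)) ∧
      (∀ t ∈ Icc (u a) (u c), HasDerivWithinAt w (w' t) (Icc (u a) (u c)) t) ∧
      (∀ t ∈ Ioo (u a) (u c), HasDerivAt w (w' t) t) ∧
      w (u a) = a ∧ w' (u a) = 0 ∧
      -- w' is locally absolutely continuous on (α,ω] and
      -- w'' = f(w(t),t)(1+w'(t)²)^{3/2} a.e. in (α,ω)
      (∀ α' ∈ Ioc (u a) (u c),
        IntegrableOn (fun t => f (w t) t * (1 + (w' t) ^ 2) ^ ((3:ℝ)/2)) (Icc α' (u c)) ∧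
        ∀ t ∈ Icc α' (u c),
          w' t = w' α' + ∫ s in α'..t, f (w s) s * (1 + (w' s) ^ 2) ^ ((3:ℝ)/2)) :=
  inverse_solves_reflected_curvature_equation_general a c hac f u u' u'' hu_cont hu_deriv hu'_cont
    hu'_pos hu'_locAC hblow heq w hw_inv₁ hw_inv₂
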